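/- arXiv:1503.02970 — 4 statements merged into one kernel-verified Lean document; each statement's English description precedes it below -/
import Mathlib

section
/- Let P₁ and P₂ be disjoint finite sets of points in ℝ² whose union S is in general position (no three points of S are collinear) and satisfies |S| ≥ 2. Then there exist two distinct points a, b ∈ S such that the line through a and b is a ham-sandwich cut of (P₁, P₂), i.e., for each i ∈ {1,2}, each of the two open half-planes bounded by the line through a and b contains at most |Pᵢ|/2 points of Pᵢ. -/
/-- Orientation determinant of the ordered triple `(p, q, r)` in `ℝ²`:
`det (q − p, r − p)`. -/
def det3 (p q r : ℝ × ℝ) : ℝ :=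
  (q.1 - p.1) * (r.2 - p.2) - (q.2 - p.2) * (r.1 - p.1)

/-- The line through `a` and `b` is a ham-sandwich cut of `(P₁, P₂)`:
each of the two open half-planes bounded by it contains at most `|Pᵢ|/2`
points of `Pᵢ`, for `i = 1, 2`. -/
def IsHamSandwichCut (a b : ℝ × ℝ) (P₁ P₂ : Finset (ℝ × ℝ)) : Prop :=
  2 * (P₁.filter (fun x => 0 < det3 a b x)).card ≤ P₁.card ∧
  2 * (P₁.filter (fun x => det3 a b x < 0)).card ≤ P₁.card ∧
  2 * (P₂.filter (fun x => 0 < det3 a b x)).card ≤ P₂.card ∧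
  2 * (P₂.filter (fun x => det3 a b x < 0)).card ≤ P₂.card


noncomputable def msup (T : Finset (ℝ × ℝ)) (f : ℝ × ℝ → ℝ) : ℝ :=
  if h : T.Nonempty then T.sup' h f else 0

noncomputable def med (Q : Finset (ℝ × ℝ)) (k : ℕ) (f : ℝ × ℝ → ℝ) : ℝ :=
  if h : (Q.powersetCard k).Nonempty then (Q.powersetCard k).inf' h (fun T => msup T f) else 0

variable {Q T : Finset (ℝ × ℝ)} {f : ℝ × ℝ → ℝ} {r : ℕ}

lemma med_mem (h : r + 1 ≤ Q.card) : ∃ p ∈ Q, f p = med Q (r+1) f := by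
  have hne : (Q.powersetCard (r+1)).Nonempty := Finset.powersetCard_nonempty.2 h
  rw [med, dif_pos hne]
  obtain ⟨T, hT, hTe⟩ := Finset.exists_mem_eq_inf' hne (fun T => msup T f)
  rw [Finset.mem_powersetCard] at hT
  have hTne : T.Nonempty := Finset.card_pos.1 (by omega)
  rw [hTe, msup, dif_pos hTne]
  obtain ⟨p, hp, hpe⟩ := Finset.exists_mem_eq_sup' hTne f
  exact ⟨p, hT.1 hp, hpe.symm⟩

lemma card_lt_med_le (hQ : Q.card = 2*r+1) :
    (Q.filter fun p => f p < med Q (r+1) f).card ≤ r := by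
  by_contra hcon
  push_neg at hcon
  obtain ⟨T, hTsub, hTcard⟩ := Finset.exists_subset_card_eq hcon
  have hTQ : T ⊆ Q := hTsub.trans (Finset.filter_subset _ _)
  have hTne : T.Nonempty := Finset.card_pos.1 (by omega)
  have hne : (Q.powersetCard (r+1)).Nonempty := Finset.powersetCard_nonempty.2 (by omega)
  have hle : med Q (r+1) f ≤ T.sup' hTne f := by
    rw [med, dif_pos hne]
    have : msup T f = T.sup' hTne f := dif_pos hTne
    exact this ▸ Finset.inf'_le _ (Finset.mem_powersetCard.2 ⟨hTQ, hTcard⟩)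
  obtain ⟨p, hp, hpe⟩ := Finset.exists_mem_eq_sup' hTne f
  have := (Finset.mem_filter.1 (hTsub hp)).2
  rw [hpe] at hle
  linarith

lemma card_med_lt_le (hQ : Q.card = 2*r+1) :
    (Q.filter fun p => med Q (r+1) f < f p).card ≤ r := by
  have hne : (Q.powersetCard (r+1)).Nonempty := Finset.powersetCard_nonempty.2 (by omega)
  obtain ⟨T, hT, hTe⟩ := Finset.exists_mem_eq_inf' hne (fun T => msup T f)
  rw [Finset.mem_powersetCard] at hT
  have hTne : T.Nonempty := Finset.card_pos.1 (by omega)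
  have hub : ∀ p ∈ T, f p ≤ med Q (r+1) f := by
    intro p hp
    rw [med, dif_pos hne, hTe, msup, dif_pos hTne]
    exact Finset.le_sup' f hp
  have hsub : (Q.filter fun p => med Q (r+1) f < f p) ⊆ Q \ T := by
    intro p hp
    rw [Finset.mem_filter] at hp
    rw [Finset.mem_sdiff]
    exact ⟨hp.1, fun hpT => absurd (hub p hpT) (not_le.2 hp.2)⟩
  calc (Q.filter fun p => med Q (r+1) f < f p).card ≤ (Q \ T).card := Finset.card_le_card hsub
    _ = Q.card - T.card := Finset.card_sdiff_of_subset hT.1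
    _ ≤ r := by omega

lemma med_eq_of {a : ℝ × ℝ} (hQ : Q.card = 2*r+1) (ha : a ∈ Q)
    (h1 : (Q.filter fun p => f p < f a).card ≤ r)
    (h2 : (Q.filter fun p => f a < f p).card ≤ r) :
    med Q (r+1) f = f a := by
  have hne : (Q.powersetCard (r+1)).Nonempty := Finset.powersetCard_nonempty.2 (by omega)
  apply le_antisymm
  · have hT0 : r + 1 ≤ (Q.filter fun p => f p ≤ f a).card := by
      have := Finset.card_filter_add_card_filter_not (s := Q)
        (p := fun p => f a < f p)
      have heq : (Q.filter fun p => ¬ f a < f p) = Q.filter fun p => f p ≤ f a := by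
        apply Finset.filter_congr; intro p _; simp [not_lt]
      rw [heq] at this; omega
    obtain ⟨T, hTsub, hTcard⟩ := Finset.exists_subset_card_eq hT0
    have hTQ : T ⊆ Q := hTsub.trans (Finset.filter_subset _ _)
    have hTne : T.Nonempty := Finset.card_pos.1 (by omega)
    have hle : med Q (r+1) f ≤ T.sup' hTne f := by
      rw [med, dif_pos hne]
      have : msup T f = T.sup' hTne f := dif_pos hTne
      exact this ▸ Finset.inf'_le _ (Finset.mem_powersetCard.2 ⟨hTQ, hTcard⟩)
    refine hle.trans (Finset.sup'_le _ _ fun p hp => ?_)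
    exact (Finset.mem_filter.1 (hTsub hp)).2
  · rw [med, dif_pos hne]
    apply Finset.le_inf'
    intro T hT
    rw [Finset.mem_powersetCard] at hT
    have hTne : T.Nonempty := Finset.card_pos.1 (by omega)
    rw [msup, dif_pos hTne]
    by_contra hcon
    push_neg at hcon
    have hsub : T ⊆ Q.filter fun p => f p < f a := by
      intro p hp
      exact Finset.mem_filter.2 ⟨hT.1 hp, lt_of_le_of_lt (Finset.le_sup' f hp) hcon⟩
    have := Finset.card_le_card hsub
    omega

lemma med_continuous (h : r + 1 ≤ Q.card) (g : ℝ × ℝ → ℝ → ℝ) (hg : ∀ p, Continuous (g p)) :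
    Continuous fun x => med Q (r+1) (fun p => g p x) := by
  have hne : (Q.powersetCard (r+1)).Nonempty := Finset.powersetCard_nonempty.2 h
  simp only [med, dif_pos hne]
  apply Continuous.finset_inf'_apply hne
  intro T hT
  rw [Finset.mem_powersetCard] at hT
  have hTne : T.Nonempty := Finset.card_pos.1 (by omega)
  simp only [msup, dif_pos hTne]
  exact Continuous.finset_sup'_apply hTne fun p _ => hg p

def lval (p : ℝ × ℝ) (x : ℝ) : ℝ := p.1 * x - p.2

lemma lval_continuous (p : ℝ × ℝ) : Continuous (lval p) := by
  unfold lval; fun_prop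

lemma exists_fst_median {Q : Finset (ℝ × ℝ)} {r : ℕ} (hQ : Q.card = 2*r+1)
    (hinj : ∀ p ∈ Q, ∀ q ∈ Q, p ≠ q → p.1 ≠ q.1) :
    ∃ a ∈ Q, (Q.filter fun p => p.1 < a.1).card = r ∧ (Q.filter fun p => a.1 < p.1).card = r := by
  obtain ⟨a, ha, hval⟩ := med_mem (f := fun p => p.1) (Q := Q) (r := r) (by omega)
  have h1 : (Q.filter fun p => p.1 < a.1).card ≤ r := by
    have := card_lt_med_le (f := fun p => p.1) hQ
    rwa [← hval] at this
  have h2 : (Q.filter fun p => a.1 < p.1).card ≤ r := by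
    have := card_med_lt_le (f := fun p => p.1) hQ
    rwa [← hval] at this
  have hsplit : (Q.filter fun p => p.1 ≠ a.1).card
      = (Q.filter fun p => p.1 < a.1).card + (Q.filter fun p => a.1 < p.1).card := by
    rw [← Finset.card_union_of_disjoint (Finset.disjoint_left.2 (by
      intro p hp1 hp2
      rw [Finset.mem_filter] at hp1 hp2
      exact absurd (lt_trans hp1.2 hp2.2) (lt_irrefl _)))]
    congr 1
    ext p
    simp only [Finset.mem_filter, Finset.mem_union]
    constructor
    · rintro ⟨hp, hne⟩
      rcases lt_or_gt_of_ne hne with h | h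
      · exact Or.inl ⟨hp, h⟩
      · exact Or.inr ⟨hp, h⟩
    · rintro (⟨hp, h⟩ | ⟨hp, h⟩)
      · exact ⟨hp, ne_of_lt h⟩
      · exact ⟨hp, ne_of_gt h⟩
  have heqa : (Q.filter fun p => ¬ p.1 ≠ a.1) = {a} := by
    ext p
    simp only [Finset.mem_filter, not_not, Finset.mem_singleton]
    constructor
    · rintro ⟨hp, hpe⟩
      by_contra hne
      exact hinj p hp a ha hne hpe
    · rintro rfl; exact ⟨ha, rfl⟩
  have htot := Finset.card_filter_add_card_filter_not (s := Q) (p := fun p => p.1 ≠ a.1)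
  rw [heqa] at htot
  simp only [Finset.card_singleton] at htot
  exact ⟨a, ha, by omega, by omega⟩

set_option maxHeartbeats 2000000 in
lemma core (P₁ P₂ : Finset (ℝ × ℝ)) (r s : ℕ) (h1 : P₁.card = 2*r+1) (h2 : P₂.card = 2*s+1)
    (hdisj : Disjoint P₁ P₂)
    (hinj : ∀ p ∈ P₁ ∪ P₂, ∀ q ∈ P₁ ∪ P₂, p ≠ q → p.1 ≠ q.1) :
    ∃ a ∈ P₁ ∪ P₂, ∃ b ∈ P₁ ∪ P₂, a ≠ b ∧ IsHamSandwichCut a b P₁ P₂ := by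
  set S := P₁ ∪ P₂ with hS
  obtain ⟨a, haP, har1, har2⟩ := exists_fst_median h1
    (fun p hp q hq => hinj p (Finset.mem_union_left _ hp) q (Finset.mem_union_left _ hq))
  obtain ⟨b, hbP, hbs1, hbs2⟩ := exists_fst_median h2
    (fun p hp q hq => hinj p (Finset.mem_union_right _ hp) q (Finset.mem_union_right _ hq))
  have haS : a ∈ S := Finset.mem_union_left _ haP
  have hbS : b ∈ S := Finset.mem_union_right _ hbP
  have hab : a ≠ b := fun h => (Finset.disjoint_left.1 hdisj haP) (h ▸ hbP)
  have hab1 : a.1 ≠ b.1 := hinj a haS b hbS hab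
  have hSne : S.Nonempty := ⟨a, haS⟩
  set D := S ×ˢ S with hD
  have hDne : D.Nonempty := hSne.product hSne
  set c : (ℝ × ℝ) × (ℝ × ℝ) → ℝ := fun pq => (pq.1.2 - pq.2.2) / (pq.1.1 - pq.2.1) with hc
  set Xp := D.sup' hDne c + 1 with hXp
  set Xm := D.inf' hDne c - 1 with hXm
  have key : ∀ p ∈ S, ∀ q ∈ S, p.1 < q.1 →
      lval p Xp < lval q Xp ∧ lval q Xm < lval p Xm := by
    intro p hp q hq hlt
    have hmem : (p, q) ∈ D := Finset.mem_product.2 ⟨hp, hq⟩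
    have hup : c (p, q) < Xp := lt_of_le_of_lt (Finset.le_sup' c hmem) (by rw [hXp]; linarith)
    have hdn : Xm < c (p, q) := lt_of_lt_of_le (by rw [hXm]; linarith) (Finset.inf'_le c hmem)
    have hneg : p.1 - q.1 < 0 := by linarith
    have e1 : Xp * (p.1 - q.1) < p.2 - q.2 := (div_lt_iff_of_neg hneg).1 hup
    have e2 : p.2 - q.2 < Xm * (p.1 - q.1) := (lt_div_iff_of_neg hneg).1 hdn
    constructor
    · show p.1 * Xp - p.2 < q.1 * Xp - q.2
      nlinarith
    · show q.1 * Xm - q.2 < p.1 * Xm - p.2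
      nlinarith
  -- med values at the extreme slopes
  have medeq : ∀ (Q : Finset (ℝ × ℝ)) (n : ℕ) (e : ℝ × ℝ), Q.card = 2*n+1 → Q ⊆ S → e ∈ Q →
      (Q.filter fun p => p.1 < e.1).card = n → (Q.filter fun p => e.1 < p.1).card = n →
      med Q (n+1) (fun p => lval p Xp) = lval e Xp ∧
      med Q (n+1) (fun p => lval p Xm) = lval e Xm := by
    intro Q n e hQ hQS he hlt hgt
    have heS : e ∈ S := hQS he
    have tri : ∀ p ∈ Q, p.1 ≠ e.1 → (p.1 < e.1 ↔ lval p Xp < lval e Xp)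
        ∧ (e.1 < p.1 ↔ lval p Xm < lval e Xm) := by
      intro p hp hne
      have hpS : p ∈ S := hQS hp
      rcases lt_or_gt_of_ne hne with h | h
      · have k1 := key p hpS e heS h
        exact ⟨iff_of_true h k1.1, iff_of_false (not_lt.2 (le_of_lt h))
          (not_lt.2 (le_of_lt k1.2))⟩
      · have k1 := key e heS p hpS h
        exact ⟨iff_of_false (not_lt.2 (le_of_lt h)) (not_lt.2 (le_of_lt k1.1)),
          iff_of_true h k1.2⟩
    have hfix : ∀ p ∈ Q, p.1 = e.1 → p = e := by
      intro p hp hpe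
      by_contra hne
      exact hinj p (hQS hp) e heS hne hpe
    constructor
    · apply med_eq_of hQ he
      · have : (Q.filter fun p => lval p Xp < lval e Xp) = Q.filter fun p => p.1 < e.1 := by
          apply Finset.filter_congr
          intro p hp
          by_cases hne : p.1 = e.1
          · have : p = e := hfix p hp hne
            subst this
            simp
          · exact ((tri p hp hne).1).symm
        rw [this, hlt]
      · have : (Q.filter fun p => lval e Xp < lval p Xp) = Q.filter fun p => e.1 < p.1 := by
          apply Finset.filter_congr
          intro p hp
          by_cases hne : p.1 = e.1
          · have : p = e := hfix p hp hne
            subst this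
            simp
          · rcases lt_or_gt_of_ne hne with h | h
            · have k1 := key p (hQS hp) e heS h
              exact iff_of_false (not_lt.2 (le_of_lt k1.1)) (not_lt.2 (le_of_lt h))
            · have k1 := key e heS p (hQS hp) h
              exact iff_of_true k1.1 h
        rw [this, hgt]
    · apply med_eq_of hQ he
      · have : (Q.filter fun p => lval p Xm < lval e Xm) = Q.filter fun p => e.1 < p.1 := by
          apply Finset.filter_congr
          intro p hp
          by_cases hne : p.1 = e.1
          · have : p = e := hfix p hp hne
            subst this
            simp
          · exact ((tri p hp hne).2).symm
        rw [this, hgt]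
      · have : (Q.filter fun p => lval e Xm < lval p Xm) = Q.filter fun p => p.1 < e.1 := by
          apply Finset.filter_congr
          intro p hp
          by_cases hne : p.1 = e.1
          · have : p = e := hfix p hp hne
            subst this
            simp
          · rcases lt_or_gt_of_ne hne with h | h
            · have k1 := key p (hQS hp) e heS h
              exact iff_of_true k1.2 h
            · have k1 := key e heS p (hQS hp) h
              exact iff_of_false (not_lt.2 (le_of_lt k1.2)) (not_lt.2 (le_of_lt h))
        rw [this, hlt]
  obtain ⟨medA_p, medA_m⟩ := medeq P₁ r a h1 Finset.subset_union_left haP har1 har2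
  obtain ⟨medB_p, medB_m⟩ := medeq P₂ s b h2 Finset.subset_union_right hbP hbs1 hbs2
  set g : ℝ → ℝ := fun x => med P₁ (r+1) (fun p => lval p x) - med P₂ (s+1) (fun p => lval p x)
    with hg
  have hgc : Continuous g :=
    (med_continuous (by omega) lval lval_continuous).sub
      (med_continuous (by omega) lval lval_continuous)
  have hgXp : g Xp = lval a Xp - lval b Xp := by rw [hg]; simp only [medA_p, medB_p]
  have hgXm : g Xm = lval a Xm - lval b Xm := by rw [hg]; simp only [medA_m, medB_m]
  have h0 : (0:ℝ) ∈ Set.uIcc (g Xm) (g Xp) := by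
    rcases lt_or_gt_of_ne hab1 with h | h
    · have k1 := key a haS b hbS h
      exact Set.mem_uIcc.2 (Or.inr ⟨by rw [hgXp]; linarith, by rw [hgXm]; linarith⟩)
    · have k1 := key b hbS a haS h
      exact Set.mem_uIcc.2 (Or.inl ⟨by rw [hgXm]; linarith, by rw [hgXp]; linarith⟩)
  obtain ⟨x₀, _, hx₀⟩ := intermediate_value_uIcc hgc.continuousOn h0
  set y := med P₁ (r+1) (fun p => lval p x₀) with hy
  have hy2 : med P₂ (s+1) (fun p => lval p x₀) = y := by
    rw [hg] at hx₀; simp only at hx₀; rw [hy]; linarith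
  obtain ⟨p, hpP, hpval⟩ := med_mem (Q := P₁) (f := fun z => lval z x₀) (r := r) (by omega)
  obtain ⟨q, hqP, hqval⟩ := med_mem (Q := P₂) (f := fun z => lval z x₀) (r := s) (by omega)
  rw [← hy] at hpval
  rw [hy2] at hqval
  have hpq : p ≠ q := fun h => (Finset.disjoint_left.1 hdisj hpP) (h ▸ hqP)
  have hpq1 : p.1 ≠ q.1 :=
    hinj p (Finset.mem_union_left _ hpP) q (Finset.mem_union_right _ hqP) hpq
  have hdet : ∀ z : ℝ × ℝ, det3 p q z = (q.1 - p.1) * (y - lval z x₀) := by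
    intro z
    have hp2 : p.2 = p.1 * x₀ - y := by
      have := hpval; simp only [lval] at this; linarith
    have hq2 : q.2 = q.1 * x₀ - y := by
      have := hqval; simp only [lval] at this; linarith
    simp only [det3, lval]
    rw [hp2, hq2]
    ring
  have ca1 : (P₁.filter fun z => lval z x₀ < y).card ≤ r :=
    card_lt_med_le (f := fun z => lval z x₀) h1
  have ca2 : (P₁.filter fun z => y < lval z x₀).card ≤ r :=
    card_med_lt_le (f := fun z => lval z x₀) h1
  have cb1 : (P₂.filter fun z => lval z x₀ < y).card ≤ s := by
    have := card_lt_med_le (f := fun z => lval z x₀) h2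
    rwa [hy2] at this
  have cb2 : (P₂.filter fun z => y < lval z x₀).card ≤ s := by
    have := card_med_lt_le (f := fun z => lval z x₀) h2
    rwa [hy2] at this
  have main : ∀ (P : Finset (ℝ × ℝ)) (n : ℕ), P.card = 2*n+1 →
      (P.filter fun z => lval z x₀ < y).card ≤ n →
      (P.filter fun z => y < lval z x₀).card ≤ n →
      2 * (P.filter fun z => 0 < det3 p q z).card ≤ P.card ∧
      2 * (P.filter fun z => det3 p q z < 0).card ≤ P.card := by
    intro P n hP hlt hgt
    rcases lt_or_gt_of_ne hpq1 with hh | hh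
    · have hpos : 0 < q.1 - p.1 := by linarith
      constructor
      · have he : P.filter (fun z => 0 < det3 p q z) = P.filter fun z => lval z x₀ < y := by
          apply Finset.filter_congr
          intro z _
          rw [hdet z]
          constructor <;> intro h' <;> nlinarith
        rw [he]; omega
      · have he : P.filter (fun z => det3 p q z < 0) = P.filter fun z => y < lval z x₀ := by
          apply Finset.filter_congr
          intro z _
          rw [hdet z]
          constructor <;> intro h' <;> nlinarith
        rw [he]; omega
    · have hneg : q.1 - p.1 < 0 := by linarith
      constructor
      · have he : P.filter (fun z => 0 < det3 p q z) = P.filter fun z => y < lval z x₀ := by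
          apply Finset.filter_congr
          intro z _
          rw [hdet z]
          constructor <;> intro h' <;> nlinarith
        rw [he]; omega
      · have he : P.filter (fun z => det3 p q z < 0) = P.filter fun z => lval z x₀ < y := by
          apply Finset.filter_congr
          intro z _
          rw [hdet z]
          constructor <;> intro h' <;> nlinarith
        rw [he]; omega
  obtain ⟨m1, m2⟩ := main P₁ r h1 ca1 ca2
  obtain ⟨m3, m4⟩ := main P₂ s h2 cb1 cb2
  exact ⟨p, Finset.mem_union_left _ hpP, q, Finset.mem_union_right _ hqP, hpq, m1, m2, m3, m4⟩

lemma cut_odd (P₁ P₂ : Finset (ℝ × ℝ)) (h1 : Odd P₁.card) (h2 : Odd P₂.card)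
    (hdisj : Disjoint P₁ P₂) :
    ∃ a ∈ P₁ ∪ P₂, ∃ b ∈ P₁ ∪ P₂, a ≠ b ∧ IsHamSandwichCut a b P₁ P₂ := by
  obtain ⟨r, hr⟩ := h1
  obtain ⟨s, hs⟩ := h2
  set S := P₁ ∪ P₂ with hS
  set Bad := (S ×ˢ S).image
    (fun pq : (ℝ × ℝ) × (ℝ × ℝ) => (pq.2.1 - pq.1.1) / (pq.1.2 - pq.2.2)) with hBad
  obtain ⟨cc, hcc⟩ := Infinite.exists_notMem_finset Bad
  set T : ℝ × ℝ → ℝ × ℝ := fun p => (p.1 + cc * p.2, p.2) with hT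
  have hTinj : Function.Injective T := by
    intro u v huv
    simp only [hT, Prod.mk.injEq] at huv
    obtain ⟨huv1, huv2⟩ := huv
    have h1 : u.1 = v.1 := by rw [huv2] at huv1; linarith
    exact Prod.ext h1 huv2
  have hinj' : ∀ p' ∈ P₁.image T ∪ P₂.image T, ∀ q' ∈ P₁.image T ∪ P₂.image T,
      p' ≠ q' → p'.1 ≠ q'.1 := by
    intro p' hp' q' hq' hne
    rw [← Finset.image_union] at hp' hq'
    obtain ⟨u, hu, rfl⟩ := Finset.mem_image.1 hp'
    obtain ⟨v, hv, rfl⟩ := Finset.mem_image.1 hq'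
    have huv : u ≠ v := fun h => hne (by rw [h])
    intro h1eq
    simp only [hT] at h1eq
    by_cases h2 : u.2 = v.2
    · have : u.1 = v.1 := by rw [h2] at h1eq; linarith
      exact huv (Prod.ext this h2)
    · apply hcc
      refine Finset.mem_image.2 ⟨(u, v), Finset.mem_product.2 ⟨hu, hv⟩, ?_⟩
      have hden : u.2 - v.2 ≠ 0 := sub_ne_zero.2 h2
      field_simp
      linarith
  have hdisj' : Disjoint (P₁.image T) (P₂.image T) :=
    (Finset.disjoint_image hTinj).2 hdisj
  have hcard1 : (P₁.image T).card = 2*r+1 := by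
    rw [Finset.card_image_of_injective _ hTinj]; omega
  have hcard2 : (P₂.image T).card = 2*s+1 := by
    rw [Finset.card_image_of_injective _ hTinj]; omega
  obtain ⟨a', ha', b', hb', hab', hcut⟩ :=
    core (P₁.image T) (P₂.image T) r s hcard1 hcard2 hdisj' hinj'
  rw [← Finset.image_union] at ha' hb'
  obtain ⟨a, haS, rfl⟩ := Finset.mem_image.1 ha'
  obtain ⟨b, hbS, rfl⟩ := Finset.mem_image.1 hb'
  have hdet : ∀ u v z : ℝ × ℝ, det3 (T u) (T v) (T z) = det3 u v z := by
    intro u v z; simp only [hT, det3]; ring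
  have hab : a ≠ b := fun h => hab' (by rw [h])
  have htr : ∀ (P : Finset (ℝ × ℝ)),
      ((P.image T).filter fun z => 0 < det3 (T a) (T b) z).card
        = (P.filter fun z => 0 < det3 a b z).card ∧
      ((P.image T).filter fun z => det3 (T a) (T b) z < 0).card
        = (P.filter fun z => det3 a b z < 0).card := by
    intro P
    constructor
    · rw [Finset.filter_image, Finset.card_image_of_injective _ hTinj]
      congr 1
      apply Finset.filter_congr
      intro z _
      rw [hdet a b z]
    · rw [Finset.filter_image, Finset.card_image_of_injective _ hTinj]
      congr 1
      apply Finset.filter_congr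
      intro z _
      rw [hdet a b z]
  obtain ⟨c1, c2, c3, c4⟩ := hcut
  rw [(htr P₁).1, Finset.card_image_of_injective _ hTinj] at c1
  rw [(htr P₁).2, Finset.card_image_of_injective _ hTinj] at c2
  rw [(htr P₂).1, Finset.card_image_of_injective _ hTinj] at c3
  rw [(htr P₂).2, Finset.card_image_of_injective _ hTinj] at c4
  exact ⟨a, haS, b, hbS, hab, c1, c2, c3, c4⟩

lemma card_filter_insert_le {x : ℝ × ℝ} {P : Finset (ℝ × ℝ)} (φ : ℝ × ℝ → Prop)
    [DecidablePred φ] : ((insert x P).filter φ).card ≤ (P.filter φ).card + 1 := by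
  rw [Finset.filter_insert]
  split
  · exact Finset.card_insert_le _ _
  · omega

lemma cut_insert_left {a b x : ℝ × ℝ} {P₁ P₂ : Finset (ℝ × ℝ)} (hx : x ∉ P₁)
    (hodd : Odd P₁.card) (h : IsHamSandwichCut a b P₁ P₂) :
    IsHamSandwichCut a b (insert x P₁) P₂ := by
  obtain ⟨m, hm⟩ := hodd
  obtain ⟨c1, c2, c3, c4⟩ := h
  have hcard : (insert x P₁).card = P₁.card + 1 := Finset.card_insert_of_notMem hx
  have k1 := card_filter_insert_le (x := x) (P := P₁) (fun z => 0 < det3 a b z)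
  have k2 := card_filter_insert_le (x := x) (P := P₁) (fun z => det3 a b z < 0)
  exact ⟨by omega, by omega, c3, c4⟩

lemma cut_insert_right {a b x : ℝ × ℝ} {P₁ P₂ : Finset (ℝ × ℝ)} (hx : x ∉ P₂)
    (hodd : Odd P₂.card) (h : IsHamSandwichCut a b P₁ P₂) :
    IsHamSandwichCut a b P₁ (insert x P₂) := by
  obtain ⟨m, hm⟩ := hodd
  obtain ⟨c1, c2, c3, c4⟩ := h
  have hcard : (insert x P₂).card = P₂.card + 1 := Finset.card_insert_of_notMem hx
  have k1 := card_filter_insert_le (x := x) (P := P₂) (fun z => 0 < det3 a b z)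
  have k2 := card_filter_insert_le (x := x) (P := P₂) (fun z => det3 a b z < 0)
  exact ⟨c1, c2, by omega, by omega⟩

lemma cut_oddleft (P₁ P₂ : Finset (ℝ × ℝ)) (h1 : Odd P₁.card) (h2 : P₂.Nonempty)
    (hdisj : Disjoint P₁ P₂) :
    ∃ a ∈ P₁ ∪ P₂, ∃ b ∈ P₁ ∪ P₂, a ≠ b ∧ IsHamSandwichCut a b P₁ P₂ := by
  rcases Nat.even_or_odd P₂.card with he | ho
  · obtain ⟨x, hx⟩ := h2
    have hpos : 0 < P₂.card := Finset.card_pos.2 ⟨x, hx⟩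
    obtain ⟨k, hk⟩ := he
    have hc2 : Odd (P₂.erase x).card := by
      rw [Finset.card_erase_of_mem hx]
      exact ⟨k - 1, by omega⟩
    have hdisj' : Disjoint P₁ (P₂.erase x) := hdisj.mono_right (Finset.erase_subset _ _)
    obtain ⟨a, ha, b, hb, hab, hcut⟩ := cut_odd P₁ (P₂.erase x) h1 hc2 hdisj'
    have hsub : P₁ ∪ P₂.erase x ⊆ P₁ ∪ P₂ :=
      Finset.union_subset_union_right (Finset.erase_subset _ _)
    have hie : insert x (P₂.erase x) = P₂ := Finset.insert_erase hx
    refine ⟨a, hsub ha, b, hsub hb, hab, ?_⟩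
    rw [← hie]
    exact cut_insert_right (Finset.notMem_erase _ _) hc2 hcut
  · exact cut_odd P₁ P₂ h1 ho hdisj

lemma cut_nonempty (P₁ P₂ : Finset (ℝ × ℝ)) (h1 : P₁.Nonempty) (h2 : P₂.Nonempty)
    (hdisj : Disjoint P₁ P₂) :
    ∃ a ∈ P₁ ∪ P₂, ∃ b ∈ P₁ ∪ P₂, a ≠ b ∧ IsHamSandwichCut a b P₁ P₂ := by
  rcases Nat.even_or_odd P₁.card with he | ho
  · obtain ⟨x, hx⟩ := h1
    have hpos : 0 < P₁.card := Finset.card_pos.2 ⟨x, hx⟩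
    obtain ⟨k, hk⟩ := he
    have hc1 : Odd (P₁.erase x).card := by
      rw [Finset.card_erase_of_mem hx]
      exact ⟨k - 1, by omega⟩
    have hdisj' : Disjoint (P₁.erase x) P₂ := hdisj.mono_left (Finset.erase_subset _ _)
    obtain ⟨a, ha, b, hb, hab, hcut⟩ := cut_oddleft (P₁.erase x) P₂ hc1 h2 hdisj'
    have hsub : P₁.erase x ∪ P₂ ⊆ P₁ ∪ P₂ :=
      Finset.union_subset_union_left (Finset.erase_subset _ _)
    have hie : insert x (P₁.erase x) = P₁ := Finset.insert_erase hx
    refine ⟨a, hsub ha, b, hsub hb, hab, ?_⟩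
    rw [← hie]
    exact cut_insert_left (Finset.notMem_erase _ _) hc1 hcut
  · exact cut_oddleft P₁ P₂ ho h2 hdisj

lemma cut_single (P : Finset (ℝ × ℝ)) (hP : 2 ≤ P.card) :
    ∃ a ∈ P, ∃ b ∈ P, a ≠ b ∧
      2 * (P.filter fun z => 0 < det3 a b z).card ≤ P.card ∧
      2 * (P.filter fun z => det3 a b z < 0).card ≤ P.card := by
  have hne : P.Nonempty := Finset.card_pos.1 (by omega)
  obtain ⟨q, hq⟩ := hne
  set B := P.erase q with hB
  have hBne : B.Nonempty := Finset.card_pos.1 (by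
    rw [hB, Finset.card_erase_of_mem hq]; omega)
  have hdisj : Disjoint ({q} : Finset (ℝ × ℝ)) B :=
    Finset.disjoint_singleton_left.2 (Finset.notMem_erase _ _)
  obtain ⟨a, ha, b, hb, hab, c1, c2, c3, c4⟩ :=
    cut_nonempty {q} B (Finset.singleton_nonempty q) hBne hdisj
  have hunion : ({q} : Finset (ℝ × ℝ)) ∪ B = P := by
    rw [← Finset.insert_eq, hB, Finset.insert_erase hq]
  rw [hunion] at ha hb
  have hcard : B.card + 1 = P.card := by
    rw [hB, Finset.card_erase_of_mem hq]; omega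
  have hq1 : ¬ (0 < det3 a b q) := by
    intro h
    rw [Finset.filter_singleton, if_pos h] at c1
    simp at c1
  have hq2 : ¬ (det3 a b q < 0) := by
    intro h
    rw [Finset.filter_singleton, if_pos h] at c2
    simp at c2
  refine ⟨a, ha, b, hb, hab, ?_, ?_⟩
  · have : P.filter (fun z => 0 < det3 a b z) = B.filter fun z => 0 < det3 a b z := by
      rw [← hunion, Finset.filter_union, Finset.filter_singleton, if_neg hq1,
        Finset.empty_union]
    rw [this]; omega
  · have : P.filter (fun z => det3 a b z < 0) = B.filter fun z => det3 a b z < 0 := by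
      rw [← hunion, Finset.filter_union, Finset.filter_singleton, if_neg hq2,
        Finset.empty_union]
    rw [this]; omega


theorem ham_sandwich_cut_exists (P₁ P₂ : Finset (ℝ × ℝ))
    (hdisj : Disjoint P₁ P₂)
    (hgp : ∀ p ∈ P₁ ∪ P₂, ∀ q ∈ P₁ ∪ P₂, ∀ r ∈ P₁ ∪ P₂,
      p ≠ q → p ≠ r → q ≠ r → det3 p q r ≠ 0)
    (hcard : 2 ≤ (P₁ ∪ P₂).card) :
    ∃ a ∈ P₁ ∪ P₂, ∃ b ∈ P₁ ∪ P₂, a ≠ b ∧ IsHamSandwichCut a b P₁ P₂ := by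
  rcases Finset.eq_empty_or_nonempty P₁ with rfl | h1
  · simp only [Finset.empty_union] at hcard ⊢
    obtain ⟨a, ha, b, hb, hab, hc1, hc2⟩ := cut_single P₂ hcard
    exact ⟨a, ha, b, hb, hab, by simp [IsHamSandwichCut], by simp [IsHamSandwichCut], hc1, hc2⟩
  rcases Finset.eq_empty_or_nonempty P₂ with rfl | h2
  · simp only [Finset.union_empty] at hcard ⊢
    obtain ⟨a, ha, b, hb, hab, hc1, hc2⟩ := cut_single P₁ hcard
    exact ⟨a, ha, b, hb, hab, hc1, hc2, by simp, by simp⟩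
  · exact cut_nonempty P₁ P₂ h1 h2 hdisj
end

section
/- Let F be a finite nonempty family of pseudo-lines any two distinct members of which cross exactly once, and let E be the upper envelope of F. Then for every f ∈ F the set {x ∈ ℝ : f(x) = E(x)} is order-connected: if f attains the envelope at x₁ and at x₂ with x₁ < x₂, then f(x) = E(x) for every x ∈ [x₁, x₂]. -/
/-- `Prec f g` (written `f ≺ g`): the pseudo-lines `f` and `g` cross exactly once,
at a point `x₀` with `f x > g x` for all `x < x₀` and `f x < g x` for all `x > x₀`. -/
def Prec (f g : ℝ → ℝ) : Prop :=
  ∃ x₀ : ℝ, f x₀ = g x₀ ∧ (∀ x < x₀, g x < f x) ∧ (∀ x > x₀, f x < g x)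

/-- Two pseudo-lines cross exactly once: there is a (necessarily unique) `x₀`
where they agree, and their difference takes opposite strict signs on the two
sides of `x₀`. -/
def CrossesOnce (f g : ℝ → ℝ) : Prop :=
  Prec f g ∨ Prec g f

/-- The set where a member of a pairwise-crossing family attains the upper
envelope is order-connected. -/
theorem envelope_attainment_order_connected
    (F : Finset (ℝ → ℝ)) (hne : F.Nonempty)
    (hcont : ∀ f ∈ F, Continuous f)
    (hcross : ∀ f ∈ F, ∀ g ∈ F, f ≠ g → CrossesOnce f g) :
    ∀ f ∈ F, ∀ x₁ x₂ : ℝ, x₁ < x₂ →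
      f x₁ = F.sup' hne (fun g => g x₁) →
      f x₂ = F.sup' hne (fun g => g x₂) →
      ∀ x ∈ Set.Icc x₁ x₂, f x = F.sup' hne (fun g => g x) := by
  intro f hf x₁ x₂ h12 h1 h2 x hx
  obtain ⟨hx1, hx2⟩ := hx
  refine le_antisymm (Finset.le_sup' (fun g => g x) hf) (Finset.sup'_le _ _ ?_)
  intro g hg
  rcases eq_or_ne f g with rfl | hne'
  · exact le_rfl
  have hg1 : g x₁ ≤ f x₁ := h1 ▸ Finset.le_sup' (fun g => g x₁) hg
  have hg2 : g x₂ ≤ f x₂ := h2 ▸ Finset.le_sup' (fun g => g x₂) hg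
  rcases hcross f hf g hg hne' with ⟨x₀, heq, hlt, hgt⟩ | ⟨x₀, heq, hlt, hgt⟩
  · -- f ≺ g : crossing x₀, need x₂ ≤ x₀
    have hx0 : x₂ ≤ x₀ := by
      by_contra h
      exact absurd hg2 (not_le.mpr (hgt x₂ (not_le.mp h)))
    rcases lt_or_eq_of_le (le_trans hx2 hx0) with h | h
    · exact (hlt x h).le
    · rw [h]; exact heq.ge
  · -- g ≺ f : crossing x₀, need x₀ ≤ x₁
    have hx0 : x₀ ≤ x₁ := by
      by_contra h
      exact absurd hg1 (not_le.mpr (hlt x₁ (not_le.mp h)))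
    rcases lt_or_eq_of_le (le_trans hx0 hx1) with h | h
    · exact (hgt x h).le
    · rw [← h]; exact heq.le
end

section
/- Let L and R be finite nonempty families of pseudo-lines such that any two distinct members of L ∪ R cross exactly once and l ≺ r holds for every l ∈ L and every r ∈ R. Then there is a unique x* ∈ ℝ with max_{l ∈ L} l(x*) = max_{r ∈ R} r(x*); moreover max_{l ∈ L} l(x) > max_{r ∈ R} r(x) for all x < x* and max_{l ∈ L} l(x) < max_{r ∈ R} r(x) for all x > x*. If in addition no three distinct members of L ∪ R take a common value at a common point, then there exist v ∈ L and w ∈ R whose (unique) crossing is at x* and lies on the upper envelope of L ∪ R. -/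
noncomputable local instance : DecidableEq (ℝ → ℝ) := Classical.decEq _

private lemma cont_sup' (s : Finset (ℝ → ℝ)) (hs : s.Nonempty)
    (h : ∀ f ∈ s, Continuous f) :
    Continuous (fun x => s.sup' hs fun f => f x) := by
  induction hs using Finset.Nonempty.cons_induction with
  | singleton a => simpa using h a (by simp)
  | cons a s ha hs ih =>
      have h1 : Continuous a := h a (by simp)
      have h2 : Continuous (fun x => s.sup' hs fun f => f x) :=
        ih (fun f hf => h f (Finset.mem_cons_of_mem hf))
      exact (h1.max h2).congr fun x => (Finset.sup'_cons (H := hs) (f := fun g => g x)).symm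

/-- Key sign lemma: if the envelopes agree at `x₀`, they have strict signs on both sides. -/
private lemma key_sign (L R : Finset (ℝ → ℝ)) (hL : L.Nonempty) (hR : R.Nonempty)
    (hprec : ∀ l ∈ L, ∀ r ∈ R, Prec l r) (x₀ : ℝ)
    (h0 : L.sup' hL (fun l => l x₀) = R.sup' hR (fun r => r x₀)) :
    (∀ x < x₀, R.sup' hR (fun r => r x) < L.sup' hL (fun l => l x)) ∧
    (∀ x > x₀, L.sup' hL (fun l => l x) < R.sup' hR (fun r => r x)) := by
  constructor
  · intro x hx
    by_contra hc
    push_neg at hc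
    -- F x ≤ G x at x < x₀
    obtain ⟨r, hr, hreq⟩ := Finset.exists_mem_eq_sup' hR (fun r => r x)
    obtain ⟨l, hl, hleq⟩ := Finset.exists_mem_eq_sup' hL (fun l => l x₀)
    obtain ⟨c, hce, hlt, hgt⟩ := hprec l hl r hr
    -- l x ≤ F x ≤ G x = r x  ⇒  x ≥ c
    have h1 : l x ≤ r x := by
      calc l x ≤ L.sup' hL (fun l => l x) := Finset.le_sup' (fun g => g x) hl
        _ ≤ R.sup' hR (fun r => r x) := hc
        _ = r x := hreq
    have hxc : c ≤ x := by
      by_contra hcx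
      exact absurd h1 (not_le.mpr (hlt x (not_le.mp hcx)))
    -- l x₀ = F x₀ = G x₀ ≥ r x₀  ⇒  x₀ ≤ c
    have h2 : r x₀ ≤ l x₀ := by
      calc r x₀ ≤ R.sup' hR (fun r => r x₀) := Finset.le_sup' (fun g => g x₀) hr
        _ = L.sup' hL (fun l => l x₀) := h0.symm
        _ = l x₀ := hleq
    have hx₀c : x₀ ≤ c := by
      by_contra hcx
      exact absurd h2 (not_le.mpr (hgt x₀ (not_le.mp hcx)))
    linarith
  · intro x hx
    by_contra hc
    push_neg at hc
    -- G x ≤ F x at x > x₀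
    obtain ⟨l, hl, hleq⟩ := Finset.exists_mem_eq_sup' hL (fun l => l x)
    obtain ⟨r, hr, hreq⟩ := Finset.exists_mem_eq_sup' hR (fun r => r x₀)
    obtain ⟨c, hce, hlt, hgt⟩ := hprec l hl r hr
    -- l x = F x ≥ G x ≥ r x  ⇒  x ≤ c
    have h1 : r x ≤ l x := by
      calc r x ≤ R.sup' hR (fun r => r x) := Finset.le_sup' (fun g => g x) hr
        _ ≤ L.sup' hL (fun l => l x) := hc
        _ = l x := hleq
    have hxc : x ≤ c := by
      by_contra hcx
      exact absurd h1 (not_le.mpr (hgt x (not_le.mp hcx)))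
    -- l x₀ ≤ F x₀ = G x₀ = r x₀  ⇒  c ≤ x₀
    have h2 : l x₀ ≤ r x₀ := by
      calc l x₀ ≤ L.sup' hL (fun l => l x₀) := Finset.le_sup' (fun g => g x₀) hl
        _ = R.sup' hR (fun r => r x₀) := h0
        _ = r x₀ := hreq
    have hx₀c : c ≤ x₀ := by
      by_contra hcx
      exact absurd h2 (not_le.mpr (hlt x₀ (not_le.mp hcx)))
    linarith

theorem envelopes_cross_once
    (L R : Finset (ℝ → ℝ)) (hL : L.Nonempty) (hR : R.Nonempty)
    (hcont : ∀ f ∈ L ∪ R, Continuous f)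
    (hcross : ∀ f ∈ L ∪ R, ∀ g ∈ L ∪ R, f ≠ g → CrossesOnce f g)
    (hprec : ∀ l ∈ L, ∀ r ∈ R, Prec l r) :
    ∃ xs : ℝ,
      L.sup' hL (fun l => l xs) = R.sup' hR (fun r => r xs) ∧
      (∀ x : ℝ, L.sup' hL (fun l => l x) = R.sup' hR (fun r => r x) → x = xs) ∧
      (∀ x < xs, R.sup' hR (fun r => r x) < L.sup' hL (fun l => l x)) ∧
      (∀ x > xs, L.sup' hL (fun l => l x) < R.sup' hR (fun r => r x)) ∧
      ((∀ f ∈ L ∪ R, ∀ g ∈ L ∪ R, ∀ h ∈ L ∪ R, f ≠ g → f ≠ h → g ≠ h →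
          ∀ x : ℝ, ¬(f x = g x ∧ g x = h x)) →
        ∃ v ∈ L, ∃ w ∈ R, v xs = w xs ∧
          v xs = (L ∪ R).sup' (hL.inl) (fun f => f xs)) := by
  classical
  set F : ℝ → ℝ := fun x => L.sup' hL (fun l => l x) with hF
  set G : ℝ → ℝ := fun x => R.sup' hR (fun r => r x) with hG
  -- total crossing function
  set c : (ℝ → ℝ) → (ℝ → ℝ) → ℝ := fun l r =>
    if h : Prec l r then Classical.choose h else 0 with hc
  have hcspec : ∀ l ∈ L, ∀ r ∈ R,
      l (c l r) = r (c l r) ∧ (∀ x < c l r, r x < l x) ∧ (∀ x > c l r, l x < r x) := by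
    intro l hl r hr
    have h := hprec l hl r hr
    simp only [hc, dif_pos h]
    exact Classical.choose_spec h
  obtain ⟨l₀, hl₀⟩ := id hL
  obtain ⟨r₀, hr₀⟩ := id hR
  set b : ℝ := L.sup' hL (fun l => c l r₀) + 1 with hb
  set a : ℝ := R.inf' hR (fun r => c l₀ r) - 1 with ha
  have hab : a ≤ b := by
    have h1 : R.inf' hR (fun r => c l₀ r) ≤ c l₀ r₀ := Finset.inf'_le _ hr₀
    have h2 : c l₀ r₀ ≤ L.sup' hL (fun l => c l r₀) := Finset.le_sup' (fun g => c g r₀) hl₀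
    simp only [ha, hb]; linarith
  have hFa : G a < F a := by
    obtain ⟨r, hr, hreq⟩ := Finset.exists_mem_eq_sup' hR (fun r => r a)
    have hlt : a < c l₀ r := by
      have : R.inf' hR (fun r => c l₀ r) ≤ c l₀ r := Finset.inf'_le _ hr
      simp only [ha]; linarith
    calc G a = r a := hreq
      _ < l₀ a := (hcspec l₀ hl₀ r hr).2.1 a hlt
      _ ≤ F a := Finset.le_sup' (fun g => g a) hl₀
  have hFb : F b < G b := by
    obtain ⟨l, hl, hleq⟩ := Finset.exists_mem_eq_sup' hL (fun l => l b)
    have hlt : b > c l r₀ := by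
      have : c l r₀ ≤ L.sup' hL (fun l => c l r₀) := Finset.le_sup' (fun g => c g r₀) hl
      simp only [hb]; linarith
    calc F b = l b := hleq
      _ < r₀ b := (hcspec l hl r₀ hr₀).2.2 b hlt
      _ ≤ G b := Finset.le_sup' (fun g => g b) hr₀
  -- IVT
  have hcF : Continuous F := cont_sup' L hL (fun f hf => hcont f (Finset.mem_union_left _ hf))
  have hcG : Continuous G := cont_sup' R hR (fun f hf => hcont f (Finset.mem_union_right _ hf))
  have hφ : Continuous (fun x => F x - G x) := hcF.sub hcG
  have hivt : Set.Icc (F b - G b) (F a - G a) ⊆ (fun x => F x - G x) '' Set.Icc a b :=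
    intermediate_value_Icc' hab hφ.continuousOn
  have h0mem : (0:ℝ) ∈ Set.Icc (F b - G b) (F a - G a) := ⟨by linarith, by linarith⟩
  obtain ⟨xs, _, hxs⟩ := hivt h0mem
  have heq : F xs = G xs := sub_eq_zero.mp hxs
  obtain ⟨hbefore, hafter⟩ := key_sign L R hL hR hprec xs heq
  refine ⟨xs, heq, ?_, hbefore, hafter, ?_⟩
  · intro x hx
    rcases lt_trichotomy x xs with h | h | h
    · exact absurd hx (ne_of_gt (hbefore x h))
    · exact h
    · exact absurd hx (ne_of_lt (hafter x h))
  · intro _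
    obtain ⟨v, hv, hveq⟩ := Finset.exists_mem_eq_sup' hL (fun l => l xs)
    obtain ⟨w, hw, hweq⟩ := Finset.exists_mem_eq_sup' hR (fun r => r xs)
    refine ⟨v, hv, w, hw, ?_, ?_⟩
    · rw [← hveq, ← hweq]; exact heq
    · rw [Finset.sup'_union hL hR, ← hveq]
      have : F xs ⊔ G xs = F xs := sup_eq_left.mpr (le_of_eq heq.symm)
      exact this.symm
end

section
/- Let A be a finite family of continuous functions ℝ → ℝ and let P₁ = (x₁, y₁), P₂ = (x₂, y₂) be points of ℝ² with x₁ < x₂ and f(x₁) ≠ y₁ and f(x₂) ≠ y₂ for every f ∈ A. Say f ∈ A separates P₁ and P₂ if exactly one of the inequalities f(x₁) > y₁ and f(x₂) > y₂ holds. If no two distinct members of A take a common value at any x ∈ (x₁, x₂), then the number of members of A that separate P₁ and P₂ equals the absolute value of |{f ∈ A : f(x₁) > y₁}| − |{f ∈ A : f(x₂) > y₂}|. -/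
/-- If no two members of a finite family of continuous functions cross between
`x₁` and `x₂`, then the number of members separating the points `(x₁, y₁)` and
`(x₂, y₂)` (being above exactly one of them) equals the absolute difference of
the counts of members above each point. -/
theorem separating_count_eq_abs_diff
    (A : Finset (ℝ → ℝ)) (hcont : ∀ f ∈ A, Continuous f)
    (x₁ y₁ x₂ y₂ : ℝ) (hx : x₁ < x₂)
    (hno₁ : ∀ f ∈ A, f x₁ ≠ y₁) (hno₂ : ∀ f ∈ A, f x₂ ≠ y₂)
    (hnocross : ∀ f ∈ A, ∀ g ∈ A, f ≠ g → ∀ x ∈ Set.Ioo x₁ x₂, f x ≠ g x) :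
    ((A.filter (fun f =>
        (y₁ < f x₁ ∧ ¬ y₂ < f x₂) ∨ (y₂ < f x₂ ∧ ¬ y₁ < f x₁))).card : ℤ)
      = |((A.filter (fun f => y₁ < f x₁)).card : ℤ)
          - ((A.filter (fun f => y₂ < f x₂)).card : ℤ)| := by
  classical
  set S1 := A.filter (fun f => y₁ < f x₁) with hS1
  set S2 := A.filter (fun f => y₂ < f x₂) with hS2
  -- key: S1 ⊆ S2 or S2 ⊆ S1
  have key : S1 ⊆ S2 ∨ S2 ⊆ S1 := by
    by_contra h
    push_neg at h
    obtain ⟨h1, h2⟩ := h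
    obtain ⟨f, hf1, hf2⟩ := Finset.not_subset.mp h1
    obtain ⟨g, hg2, hg1⟩ := Finset.not_subset.mp h2
    rw [hS1, Finset.mem_filter] at hf1
    rw [hS2, Finset.mem_filter] at hg2
    obtain ⟨hfA, hfy1⟩ := hf1
    obtain ⟨hgA, hgy2⟩ := hg2
    have hfy2 : ¬ y₂ < f x₂ := by
      intro hlt; exact hf2 (Finset.mem_filter.mpr ⟨hfA, hlt⟩)
    have hgy1 : ¬ y₁ < g x₁ := by
      intro hlt; exact hg1 (Finset.mem_filter.mpr ⟨hgA, hlt⟩)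
    have hf2' : f x₂ < y₂ := lt_of_le_of_ne (not_lt.mp hfy2) (hno₂ f hfA)
    have hg1' : g x₁ < y₁ := lt_of_le_of_ne (not_lt.mp hgy1) (hno₁ g hgA)
    have hfg : f ≠ g := by
      intro h; rw [h] at hfy1; exact absurd hfy1 (not_lt.mpr hg1'.le)
    -- IVT on f - g
    have hc : ContinuousOn (fun x => f x - g x) (Set.Icc x₁ x₂) :=
      ((hcont f hfA).sub (hcont g hgA)).continuousOn
    have h1v : (0:ℝ) ∈ Set.Ioo (f x₂ - g x₂) (f x₁ - g x₁) := by
      constructor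
      · linarith
      · linarith
    have := intermediate_value_Ioo' hx.le hc h1v
    obtain ⟨c, hc1, hc2⟩ := this
    have hc2' : f c - g c = 0 := hc2
    exact hnocross f hfA g hgA hfg c hc1 (by linarith)
  have hsep : ∀ (h : S1 ⊆ S2 ∨ S2 ⊆ S1), True := fun _ => trivial
  rcases key with hsub | hsub
  · -- S1 ⊆ S2: separating set = S2 \ S1
    have heq : A.filter (fun f =>
        (y₁ < f x₁ ∧ ¬ y₂ < f x₂) ∨ (y₂ < f x₂ ∧ ¬ y₁ < f x₁)) = S2 \ S1 := by
      ext f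
      simp only [Finset.mem_filter, Finset.mem_sdiff, hS1, hS2]
      constructor
      · rintro ⟨hfA, hor⟩
        rcases hor with ⟨h1, h2⟩ | ⟨h1, h2⟩
        · exfalso
          have := hsub (Finset.mem_filter.mpr ⟨hfA, h1⟩)
          rw [hS2, Finset.mem_filter] at this
          exact h2 this.2
        · exact ⟨⟨hfA, h1⟩, fun hc => h2 hc.2⟩
      · rintro ⟨⟨hfA, h1⟩, h2⟩
        exact ⟨hfA, Or.inr ⟨h1, fun hc => h2 ⟨hfA, hc⟩⟩⟩
    rw [heq, Finset.cast_card_sdiff hsub, abs_sub_comm,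
      abs_of_nonneg (by
        have := Finset.card_le_card hsub
        exact_mod_cast sub_nonneg.mpr (Int.ofNat_le.mpr this))]
  · -- S2 ⊆ S1: separating set = S1 \ S2
    have heq : A.filter (fun f =>
        (y₁ < f x₁ ∧ ¬ y₂ < f x₂) ∨ (y₂ < f x₂ ∧ ¬ y₁ < f x₁)) = S1 \ S2 := by
      ext f
      simp only [Finset.mem_filter, Finset.mem_sdiff, hS1, hS2]
      constructor
      · rintro ⟨hfA, hor⟩
        rcases hor with ⟨h1, h2⟩ | ⟨h1, h2⟩
        · exact ⟨⟨hfA, h1⟩, fun hc => h2 hc.2⟩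
        · exfalso
          have := hsub (Finset.mem_filter.mpr ⟨hfA, h1⟩)
          rw [hS1, Finset.mem_filter] at this
          exact h2 this.2
      · rintro ⟨⟨hfA, h1⟩, h2⟩
        exact ⟨hfA, Or.inl ⟨h1, fun hc => h2 ⟨hfA, hc⟩⟩⟩
    rw [heq, Finset.cast_card_sdiff hsub,
      abs_of_nonneg (by
        have := Finset.card_le_card hsub
        exact_mod_cast sub_nonneg.mpr (Int.ofNat_le.mpr this))]
end
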